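/- Key inequality in the proof of Boyer's lemma: under the hypotheses of the generalized Boyer lemma, setting b_λ = Σ_{ν∈I_m} β_ν·ν ∈ K_0^+(Γ), for every N one has λ ≥_K N·b_λ in K_0(Γ), i.e. λ − N·b_λ lies in the positive cone K_0^+(Γ). -/

import Mathlib

open Filter Topology ENNReal
open scoped Classical

noncomputable section

structure GradedGraph where
  V : Type
  lvl : V → ℕ
  levelFinite : ∀ n : ℕ, {v : V | lvl v = n}.Finite
  k : V → V → ℝ
  k_nonneg : ∀ a b, 0 ≤ k a b
  k_grade : ∀ a b, k a b ≠ 0 → lvl b = lvl a + 1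
  exists_up : ∀ a, ∃ b, 0 < k a b

namespace GradedGraph

variable (G : GradedGraph)

/-- The edge relation `λ ↗ μ`. -/
def Adj (a b : G.V) : Prop := 0 < G.k a b

/-- The path order: `a ≤ b` iff there is a (possibly empty) path from `a` to `b`. -/
def Le : G.V → G.V → Prop := Relation.ReflTransGen G.Adj

/-- `dimAux n a b` : weighted number of paths of length `n` from `a` to `b`. -/
def dimAux : ℕ → G.V → G.V → ℝ
  | 0, a, b => if a = b then 1 else 0
  | n + 1, a, b => ∑ᶠ c, dimAux n a c * G.k c b

/-- The shifted dimension `dim(a,b)`: weighted number of paths from `a` to `b`. -/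
def dim (a b : G.V) : ℝ := G.dimAux (G.lvl b - G.lvl a) a b

def IsIdeal (I : Set G.V) : Prop := ∀ a ∈ I, ∀ b, G.Le a b → b ∈ I

def IsCoideal (J : Set G.V) : Prop := ∀ a ∈ J, ∀ b, G.Le b a → b ∈ J

def IsSaturatedIdeal (I : Set G.V) : Prop :=
  G.IsIdeal I ∧ ∀ a, (∀ b, G.Adj a b → b ∈ I) → a ∈ I

def IsSaturatedCoideal (J : Set G.V) : Prop :=
  G.IsCoideal J ∧ ∀ a ∈ J, ∃ b ∈ J, G.Adj a b

def IsPrimitiveCoideal (J : Set G.V) : Prop :=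
  G.IsSaturatedCoideal J ∧ ∀ J1 J2 : Set G.V, G.IsSaturatedCoideal J1 →
    G.IsSaturatedCoideal J2 → J = J1 ∪ J2 → J = J1 ∨ J = J2

/-- A harmonic function `φ : Γ → ℝ≥0 ∪ {+∞}`. -/
def Harmonic (φ : G.V → ℝ≥0∞) : Prop :=
  ∀ a, φ a = ∑ᶠ b, ENNReal.ofReal (G.k a b) * φ b

/-- The submodule of relations `λ = Σ_{μ : λ↗μ} κ(λ,μ)·μ` in the free module on vertices. -/
def relSub : Submodule ℝ (G.V →₀ ℝ) :=
  Submodule.span ℝ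
    {x | ∃ a : G.V, x = Finsupp.single a 1 - ∑ᶠ b, G.k a b • Finsupp.single b (1 : ℝ)}

/-- The group `K_0(Γ)`. -/
abbrev K0 := (G.V →₀ ℝ) ⧸ G.relSub

def toK0 : (G.V →₀ ℝ) →ₗ[ℝ] G.K0 := G.relSub.mkQ

/-- The class of a vertex in `K_0(Γ)`. -/
def vtx (a : G.V) : G.K0 := G.toK0 (Finsupp.single a 1)

/-- The positive cone `K_0^+(Γ)` generated by the vertices. -/
def cone : Set G.K0 := {x | ∃ c : G.V →₀ ℝ, (∀ a, 0 ≤ c a) ∧ x = G.toK0 c}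

/-- The partial order `x ≤_K y` defined by the cone. -/
def leK (x y : G.K0) : Prop := y - x ∈ G.cone

/-- The value of (the `ℝ≥0`-linear extension of) `φ` on a nonnegative element of the
free module on vertices. -/
def evalC (φ : G.V → ℝ≥0∞) (c : G.V →₀ ℝ) : ℝ≥0∞ :=
  ∑ a ∈ c.support, ENNReal.ofReal (c a) * φ a

/-- A semifinite harmonic function: it is harmonic, not everywhere finite, and its value
on any element of the cone is the supremum of its finite values on smaller cone elements
(stated on nonnegative representatives). -/
def Semifinite (φ : G.V → ℝ≥0∞) : Prop :=
  G.Harmonic φ ∧ (∃ a, φ a = ⊤) ∧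
    ∀ c : G.V →₀ ℝ, (∀ a, 0 ≤ c a) →
      G.evalC φ c = ⨆ d : {d : G.V →₀ ℝ //
        (∀ a, 0 ≤ d a) ∧ G.leK (G.toK0 d) (G.toK0 c) ∧ G.evalC φ d ≠ ⊤},
          G.evalC φ d.1

/-- A finite or semifinite harmonic function. -/
def FinOrSemifinite (φ : G.V → ℝ≥0∞) : Prop :=
  (G.Harmonic φ ∧ ∀ a, φ a ≠ ⊤) ∨ G.Semifinite φ

/-- An indecomposable (finite or semifinite, not identically zero) harmonic function:
any finite or semifinite harmonic `ψ ≤ φ` not vanishing identically on the finiteness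
ideal of `φ` is proportional to `φ` on the finiteness ideal of `φ`. -/
def Indecomposable (φ : G.V → ℝ≥0∞) : Prop :=
  G.FinOrSemifinite φ ∧ (∃ a, φ a ≠ 0) ∧
    ∀ ψ : G.V → ℝ≥0∞, G.FinOrSemifinite ψ → (∀ a, ψ a ≤ φ a) →
      (∃ a, φ a ≠ ⊤ ∧ ψ a ≠ 0) →
        ∃ C : ℝ≥0∞, ∀ a, φ a ≠ ⊤ → ψ a = C * φ a

end GradedGraph

structure BranchingGraph extends GradedGraph where
  root : V
  root_lvl : lvl root = 0
  root_unique : ∀ v, lvl v = 0 → v = root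
  exists_down : ∀ v, lvl v ≠ 0 → ∃ u, 0 < k u v

end

/-!
Write `D_l = Σ_μ dim(λ, μ)·μ` for the expansion of `λ` to level `n + l`, so that `[D_l] = λ` in
`K_0(Γ)`, and let `J_l` be its part supported outside the ideal `I`. Since `I` is closed upwards,
expanding `J_l` by one level gives `J_{l+1}` plus a vector supported in `I` whose coefficient at `η`
is `Σ_{μ ∈ J_{n+l}} dim(λ, μ) κ(μ, η)`. For large `l` the hypothesis says that this vector dominates
coordinatewise the expansion of `b_λ` to level `n + l + 1`, whose class is `b_λ`. Hence
`[J_l] ≥ [J_{l+1}] + b_λ`, and telescoping from `λ ≥ [J_l] ≥ 0` gives `λ ≥ N·b_λ`.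
-/

lemma Finsupp.filter_apply_nonneg {α : Type*} {c : α →₀ ℝ} (hc : ∀ a, 0 ≤ c a) (p : α → Prop)
    [DecidablePred p] (a : α) : 0 ≤ c.filter p a := by
  rw [Finsupp.filter_apply]
  split_ifs
  exacts [hc a, le_rfl]

lemma finsum_mem_mul_eq_sum_support {α : Type*} {S : Set α} (c : α →₀ ℝ) (g : α → ℝ)
    (hc : ∀ a, c a ≠ 0 → a ∈ S) : ∑ᶠ a ∈ S, c a * g a = ∑ a ∈ c.support, c a * g a :=
  finsum_mem_eq_sum_of_subset _ (fun _ ha => Finsupp.mem_support_iff.2 (left_ne_zero_of_mul ha.2))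
    fun a ha => hc a (Finsupp.mem_support_iff.1 ha)

namespace GradedGraph

variable (G : GradedGraph)

lemma dimAux_nonneg (n : ℕ) (a b : G.V) : 0 ≤ G.dimAux n a b := by
  induction n generalizing b with
  | zero => rw [dimAux]; split <;> norm_num
  | succ n ih => exact finsum_nonneg fun c => mul_nonneg (ih c) (G.k_nonneg c b)

lemma exists_dimAux_k_ne_zero {n : ℕ} {a b : G.V} (h : G.dimAux (n + 1) a b ≠ 0) :
    ∃ c, G.dimAux n a c ≠ 0 ∧ G.k c b ≠ 0 := by
  obtain ⟨c, hc⟩ : ∃ c, G.dimAux n a c * G.k c b ≠ 0 := by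
    by_contra! hzero
    exact h (finsum_eq_zero_of_forall_eq_zero hzero)
  exact ⟨c, left_ne_zero_of_mul hc, right_ne_zero_of_mul hc⟩

lemma adj_of_k_ne_zero {a b : G.V} (h : G.k a b ≠ 0) : G.Adj a b :=
  (G.k_nonneg a b).lt_of_ne' h

lemma le_of_dimAux_ne_zero {n : ℕ} {a b : G.V} (h : G.dimAux n a b ≠ 0) : G.Le a b := by
  induction n generalizing b with
  | zero =>
    obtain rfl : a = b := by by_contra hab; simp [dimAux, hab] at h
    exact Relation.ReflTransGen.refl
  | succ n ih =>
    obtain ⟨c, hac, hcb⟩ := G.exists_dimAux_k_ne_zero h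
    exact (ih hac).tail (G.adj_of_k_ne_zero hcb)

lemma lvl_of_dimAux_ne_zero {n : ℕ} {a b : G.V} (h : G.dimAux n a b ≠ 0) :
    G.lvl b = G.lvl a + n := by
  induction n generalizing b with
  | zero =>
    obtain rfl : a = b := by by_contra hab; simp [dimAux, hab] at h
    rfl
  | succ n ih =>
    obtain ⟨c, hac, hcb⟩ := G.exists_dimAux_k_ne_zero h
    rw [G.k_grade c b hcb, ih hac, Nat.add_assoc]

lemma dim_eq_dimAux {n : ℕ} {a b : G.V} (h : G.lvl b = G.lvl a + n) :
    G.dim a b = G.dimAux n a b := by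
  rw [dim, h, Nat.add_sub_cancel_left]

lemma k_support_finite (a : G.V) : (Function.support (G.k a)).Finite :=
  (G.levelFinite (G.lvl a + 1)).subset fun b hb => G.k_grade a b hb

noncomputable def row (a : G.V) : G.V →₀ ℝ := Finsupp.ofSupportFinite (G.k a) (G.k_support_finite a)

lemma row_apply (a b : G.V) : G.row a b = G.k a b := rfl

lemma toK0_single_eq_toK0_row (a : G.V) : G.toK0 (Finsupp.single a 1) = G.toK0 (G.row a) := by
  have hrow : ∑ᶠ b, G.k a b • Finsupp.single b (1 : ℝ) = G.row a := by
    rw [finsum_eq_sum_of_support_subset (s := (G.row a).support)]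
    · simp_rw [← row_apply, Finsupp.smul_single_one]
      exact Finsupp.sum_single _
    · intro b hb
      exact Finsupp.mem_support_iff.2 (left_ne_zero_of_smul hb)
  refine (Submodule.Quotient.eq _).2 (Submodule.subset_span ⟨a, ?_⟩)
  rw [hrow]

noncomputable def push : (G.V →₀ ℝ) →ₗ[ℝ] G.V →₀ ℝ := Finsupp.linearCombination ℝ G.row

lemma push_apply (c : G.V →₀ ℝ) (b : G.V) :
    G.push c b = ∑ a ∈ c.support, c a * G.k a b := by
  simp [push, Finsupp.linearCombination_apply, Finsupp.sum, row_apply]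

lemma toK0_comp_push : G.toK0 ∘ₗ G.push = G.toK0 := by
  refine Finsupp.lhom_ext fun a t => ?_
  rw [LinearMap.comp_apply, push, Finsupp.linearCombination_single, map_smul,
    ← toK0_single_eq_toK0_row, ← map_smul, Finsupp.smul_single_one]

lemma push_nonneg {c : G.V →₀ ℝ} (hc : ∀ a, 0 ≤ c a) (b : G.V) : 0 ≤ G.push c b := by
  rw [push_apply]
  exact Finset.sum_nonneg fun a _ => mul_nonneg (hc a) (G.k_nonneg a b)

lemma toK0_push (c : G.V →₀ ℝ) : G.toK0 (G.push c) = G.toK0 c :=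
  LinearMap.congr_fun G.toK0_comp_push c

lemma toK0_push_iterate (r : ℕ) (c : G.V →₀ ℝ) : G.toK0 (G.push^[r] c) = G.toK0 c := by
  induction r with
  | zero => rfl
  | succ r ih => rw [Function.iterate_succ_apply', toK0_push, ih]

lemma push_iterate_single_one (r : ℕ) (a b : G.V) :
    G.push^[r] (Finsupp.single a 1) b = G.dimAux r a b := by
  induction r generalizing b with
  | zero => simp [dimAux, Finsupp.single_apply]
  | succ r ih =>
    rw [Function.iterate_succ_apply', push_apply, dimAux,
      finsum_eq_sum_of_support_subset (s := (G.push^[r] (Finsupp.single a 1)).support)]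
    · simp_rw [ih]
    · intro x hx
      rw [Finset.mem_coe, Finsupp.mem_support_iff, ih]
      exact left_ne_zero_of_mul hx

lemma push_iterate_apply (r : ℕ) (c : G.V →₀ ℝ) (b : G.V) :
    G.push^[r] c b = ∑ a ∈ c.support, c a * G.dimAux r a b := by
  have hlin : G.push^[r] = ⇑(G.push ^ r) := (Module.End.coe_pow G.push r).symm
  conv_lhs => rw [hlin, ← Finsupp.sum_single c, map_finsuppSum, Finsupp.sum_apply, Finsupp.sum]
  refine Finset.sum_congr rfl fun a _ => ?_
  rw [← Finsupp.smul_single_one, map_smul, Finsupp.smul_apply, ← hlin,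
    push_iterate_single_one, smul_eq_mul]

lemma exists_dimAux_ne_zero_of_push_iterate_ne_zero {r : ℕ} {c : G.V →₀ ℝ} {b : G.V}
    (h : G.push^[r] c b ≠ 0) : ∃ a, c a ≠ 0 ∧ G.dimAux r a b ≠ 0 := by
  rw [push_iterate_apply] at h
  obtain ⟨a, -, ha⟩ := Finset.exists_ne_zero_of_sum_ne_zero h
  exact ⟨a, left_ne_zero_of_mul ha, right_ne_zero_of_mul ha⟩

noncomputable def paths (a : G.V) (l : ℕ) : G.V →₀ ℝ := G.push^[l] (Finsupp.single a 1)

lemma paths_apply (a : G.V) (l : ℕ) (b : G.V) : G.paths a l b = G.dimAux l a b :=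
  G.push_iterate_single_one l a b

lemma paths_nonneg (a : G.V) (l : ℕ) (b : G.V) : 0 ≤ G.paths a l b :=
  (G.paths_apply a l b).symm ▸ G.dimAux_nonneg l a b

lemma push_paths (a : G.V) (l : ℕ) : G.push (G.paths a l) = G.paths a (l + 1) :=
  (Function.iterate_succ_apply' _ _ _).symm

lemma toK0_paths (a : G.V) (l : ℕ) : G.toK0 (G.paths a l) = G.vtx a :=
  G.toK0_push_iterate l _

lemma toK0_mem_cone {c : G.V →₀ ℝ} (hc : ∀ a, 0 ≤ c a) : G.toK0 c ∈ G.cone := ⟨c, hc, rfl⟩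

lemma add_mem_cone {x y : G.K0} (hx : x ∈ G.cone) (hy : y ∈ G.cone) : x + y ∈ G.cone := by
  obtain ⟨c, hc, rfl⟩ := hx
  obtain ⟨d, hd, rfl⟩ := hy
  exact ⟨c + d, fun a => add_nonneg (hc a) (hd a), (map_add _ _ _).symm⟩

lemma leK_trans {x y z : G.K0} (hxy : G.leK x y) (hyz : G.leK y z) : G.leK x z := by
  simpa [leK] using G.add_mem_cone hyz hxy

lemma leK_add_left {x y : G.K0} (h : G.leK x y) (z : G.K0) : G.leK (z + x) (z + y) := by
  simpa [leK] using h

lemma leK_add_of_mem_cone (x : G.K0) {y : G.K0} (hy : y ∈ G.cone) : G.leK x (x + y) := by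
  simpa [leK] using hy

lemma nsmul_leK_of_forall_add_leK {f : ℕ → G.K0} {b : G.K0}
    (hstep : ∀ j, G.leK (f (j + 1) + b) (f j)) (hpos : ∀ j, f j ∈ G.cone) (N : ℕ) :
    G.leK ((N : ℝ) • b) (f 0) := by
  have htele : ∀ N : ℕ, G.leK ((N : ℝ) • b + f N) (f 0) := by
    intro N
    induction N with
    | zero => simpa [leK] using G.toK0_mem_cone (c := 0) fun _ => le_rfl
    | succ N ih =>
      refine G.leK_trans ?_ ih
      have := G.leK_add_left (hstep N) ((N : ℝ) • b)
      rwa [Nat.cast_succ, add_smul, one_smul, add_right_comm, add_assoc]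
  exact G.leK_trans (G.leK_add_of_mem_cone _ (hpos N)) (htele N)

lemma toK0_filter_leK {c : G.V →₀ ℝ} (hc : ∀ a, 0 ≤ c a) (p : G.V → Prop) [DecidablePred p] :
    G.leK (G.toK0 (c.filter p)) (G.toK0 c) := by
  have hsplit := congrArg G.toK0 (c.filter_add_filter_not p)
  rw [map_add] at hsplit
  rw [leK, ← hsplit, add_sub_cancel_left]
  exact G.toK0_mem_cone (Finsupp.filter_apply_nonneg hc _)

lemma add_leK_of_le_filter_push (p : G.V → Prop) [DecidablePred p] (c d : G.V →₀ ℝ)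
    (hd : ∀ η, d η ≤ (G.push c).filter p η) :
    G.leK (G.toK0 ((G.push c).filter (¬ p ·)) + G.toK0 d) (G.toK0 c) := by
  have hsplit : G.toK0 c = G.toK0 ((G.push c).filter p) + G.toK0 ((G.push c).filter (¬ p ·)) := by
    rw [← map_add, Finsupp.filter_add_filter_not, toK0_push]
  have hdiff : G.toK0 c - (G.toK0 ((G.push c).filter (¬ p ·)) + G.toK0 d) =
      G.toK0 ((G.push c).filter p - d) := by
    rw [hsplit, map_sub]
    abel
  rw [leK, hdiff]
  exact G.toK0_mem_cone fun η => sub_nonneg.2 (hd η)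

section Ideal

variable {G} {I : Set G.V}

lemma IsIdeal.k_eq_zero_of_mem_of_notMem (hI : G.IsIdeal I) {a b : G.V} (ha : a ∈ I) (hb : b ∉ I) :
    G.k a b = 0 := by
  by_contra hk
  exact hb (hI a ha b (Relation.ReflTransGen.single (G.adj_of_k_ne_zero hk)))

lemma IsIdeal.filter_push_filter_notMem (hI : G.IsIdeal I) (c : G.V →₀ ℝ) :
    (G.push (c.filter (· ∉ I))).filter (· ∉ I) = (G.push c).filter (· ∉ I) := by
  ext b
  simp only [Finsupp.filter_apply]
  split_ifs with hb
  · rfl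
  have hin : G.push (c.filter (· ∈ I)) b = 0 := by
    rw [push_apply]
    refine Finset.sum_eq_zero fun a ha => ?_
    have haI : a ∈ I := by
      by_contra h
      simp [h] at ha
    rw [hI.k_eq_zero_of_mem_of_notMem haI hb, mul_zero]
  have hsplit := congrArg (fun x => G.push x b) (c.filter_add_filter_not (· ∈ I))
  simpa only [map_add, Finsupp.add_apply, hin, zero_add] using hsplit

lemma finsum_mul_dim_eq_push_iterate {β : G.V →₀ ℝ} {m r : ℕ}
    (hβsupp : ∀ ν, β ν ≠ 0 → ν ∈ I ∧ G.lvl ν = m) {η : G.V} (hη : G.lvl η = m + r) :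
    ∑ᶠ ν ∈ {ν : G.V | ν ∈ I ∧ G.lvl ν = m}, β ν * G.dim ν η = G.push^[r] β η := by
  rw [push_iterate_apply, ← finsum_mem_mul_eq_sum_support β _ hβsupp]
  refine finsum_mem_congr rfl fun ν hν => ?_
  rw [G.dim_eq_dimAux (by rw [hη, hν.2])]

lemma finsum_dim_mul_k_eq_push (lam : G.V) (l : ℕ) (η : G.V) :
    ∑ᶠ μ ∈ {μ : G.V | μ ∉ I ∧ G.lvl μ = G.lvl lam + l}, G.dim lam μ * G.k μ η =
      G.push ((G.paths lam l).filter (· ∉ I)) η := by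
  rw [push_apply, ← finsum_mem_mul_eq_sum_support _ _ ?_]
  · refine finsum_mem_congr rfl fun μ hμ => ?_
    rw [Finsupp.filter_apply, if_pos hμ.1, paths_apply, G.dim_eq_dimAux hμ.2]
  · intro μ hμ
    rw [Finsupp.filter_apply] at hμ
    split_ifs at hμ with hμI
    · exact absurd rfl hμ
    · exact ⟨hμI, G.lvl_of_dimAux_ne_zero (by rwa [paths_apply] at hμ)⟩

lemma IsIdeal.push_iterate_le_filter_push_paths (hI : G.IsIdeal I) {β : G.V →₀ ℝ} {m : ℕ}
    (hβsupp : ∀ ν, β ν ≠ 0 → ν ∈ I ∧ G.lvl ν = m) {lam : G.V} {l : ℕ}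
    (hm : m ≤ G.lvl lam + l + 1)
    (hl : ∀ η ∈ I, G.lvl η = G.lvl lam + l + 1 →
      (∑ᶠ ν ∈ {ν : G.V | ν ∈ I ∧ G.lvl ν = m}, β ν * G.dim ν η) ≤
        ∑ᶠ μ ∈ {μ : G.V | μ ∉ I ∧ G.lvl μ = G.lvl lam + l}, G.dim lam μ * G.k μ η)
    (η : G.V) :
    G.push^[G.lvl lam + l + 1 - m] β η ≤
      (G.push ((G.paths lam l).filter (· ∉ I))).filter (· ∈ I) η := by
  rw [Finsupp.filter_apply]
  by_cases hη : η ∈ I ∧ G.lvl η = G.lvl lam + l + 1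
  · rw [if_pos hη.1, ← finsum_mul_dim_eq_push_iterate hβsupp (by omega),
      ← finsum_dim_mul_k_eq_push]
    exact hl η hη.1 hη.2
  have hzero : G.push^[G.lvl lam + l + 1 - m] β η = 0 := by
    by_contra h
    obtain ⟨ν, hν, hνη⟩ := G.exists_dimAux_ne_zero_of_push_iterate_ne_zero h
    refine hη ⟨hI ν (hβsupp ν hν).1 η (G.le_of_dimAux_ne_zero hνη), ?_⟩
    rw [G.lvl_of_dimAux_ne_zero hνη, (hβsupp ν hν).2]
    omega
  rw [hzero]
  split_ifs
  exacts [G.push_nonneg (Finsupp.filter_apply_nonneg (G.paths_nonneg lam l) _) η, le_rfl]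

end Ideal

end GradedGraph

theorem boyer_key_inequality_general (G : GradedGraph)
    (I : Set G.V) (hI : G.IsIdeal I) (lam : G.V)
    (m : ℕ) (β : G.V →₀ ℝ)
    (hβsupp : ∀ ν, β ν ≠ 0 → ν ∈ I ∧ G.lvl ν = m)
    (hineq : ∃ L, ∀ l ≥ L, ∀ η, η ∈ I → G.lvl η = G.lvl lam + l + 1 →
      (∑ᶠ ν ∈ {ν : G.V | ν ∈ I ∧ G.lvl ν = m}, β ν * G.dim ν η) ≤
        ∑ᶠ μ ∈ {μ : G.V | μ ∉ I ∧ G.lvl μ = G.lvl lam + l},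
          G.dim lam μ * G.k μ η) :
    ∀ N : ℕ, G.leK ((N : ℝ) • G.toK0 β) (G.vtx lam) := by
  obtain ⟨L, hL⟩ := hineq
  intro N
  let l₀ := max L m
  let J : ℕ → G.K0 := fun j => G.toK0 ((G.paths lam (l₀ + j)).filter (· ∉ I))
  have hstep : ∀ j, G.leK (J (j + 1) + G.toK0 β) (J j) := by
    intro j
    have hdom := G.add_leK_of_le_filter_push (· ∈ I) _ _
      (hI.push_iterate_le_filter_push_paths hβsupp (l := l₀ + j) (by omega) (hL _ (by omega)))
    rwa [hI.filter_push_filter_notMem, G.push_paths, G.toK0_push_iterate] at hdom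
  have hpos : ∀ j, J j ∈ G.cone :=
    fun j => G.toK0_mem_cone (Finsupp.filter_apply_nonneg (G.paths_nonneg lam _) _)
  refine G.leK_trans (G.nsmul_leK_of_forall_add_leK hstep hpos N) ?_
  simpa [J, G.toK0_paths] using G.toK0_filter_leK (G.paths_nonneg lam l₀) (· ∉ I)

/-- the key inequality of Boyer's lemma: under the hypotheses of the
generalized Boyer lemma, with `b_λ = Σ_ν β_ν · ν`, one has `λ ≥_K N · b_λ` in `K_0(Γ)`
for every `N`. -/
theorem boyer_key_inequality (G : GradedGraph) (φ : G.V → ℝ≥0∞) (hφ : G.Harmonic φ)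
    (I : Set G.V) (hI : G.IsIdeal I) (lam : G.V) (hlam : lam ∉ I)
    (m : ℕ) (β : G.V →₀ ℝ) (hβ0 : ∀ ν, 0 ≤ β ν)
    (hβsupp : ∀ ν, β ν ≠ 0 → ν ∈ I ∧ G.lvl ν = m)
    (hex : ∃ ν, ν ∈ I ∧ G.lvl ν = m ∧ β ν ≠ 0 ∧ φ ν ≠ 0)
    (hineq : ∃ L, ∀ l ≥ L, ∀ η, η ∈ I → G.lvl η = G.lvl lam + l + 1 →
      (∑ᶠ ν ∈ {ν : G.V | ν ∈ I ∧ G.lvl ν = m}, β ν * G.dim ν η) ≤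
        ∑ᶠ μ ∈ {μ : G.V | μ ∉ I ∧ G.lvl μ = G.lvl lam + l},
          G.dim lam μ * G.k μ η) :
    ∀ N : ℕ, G.leK ((N : ℝ) • G.toK0 β) (G.vtx lam) :=
  boyer_key_inequality_general G I hI lam m β hβsupp hineq
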